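/- arXiv:2007.06195 — 4 statements merged into one kernel-verified Lean document; each statement's English description precedes it below -/
import Mathlib

section
/- Let f = min{0, X, Y, X+Y} be the bivariate tropical polynomial with zero coefficients, and let U_N ⊆ ℝ^{N×N} be the set of points satisfying all its linearizations on the grid {0,…,N−1}^2. Then every point u defined by u(k_1,k_2) = 0 when k_1 is even and u(k_1,k_2) = v(k_1,k_2) with arbitrary values v(k_1,k_2) ≥ 0 when k_1 is odd, belongs to U_N. Consequently U_N contains a polyhedron of dimension N·⌊N/2⌋, so dim(U_N) ≥ N·⌊N/2⌋. -/
/-- The minimum of the finite family `v` is attained at least twice. -/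
def MinTwice {m : ℕ} (v : Fin m → ℝ) : Prop :=
  ∃ j k : Fin m, j ≠ k ∧ v j = v k ∧ ∀ l, v j ≤ v l

/-- `S` is covered by finitely many affine subspaces of dimension at most `d`. -/
def DimLE {E : Type*} [AddCommGroup E] [Module ℝ E] (S : Set E) (d : ℕ) : Prop :=
  ∃ F : Finset (AffineSubspace ℝ E),
    (∀ A ∈ F, Module.finrank ℝ A.direction ≤ d) ∧ S ⊆ ⋃ A ∈ F, (A : Set E)

/-- Dimension of a subset of a real vector space: the least `d` such that the
set is contained in a finite union of affine subspaces of dimension `≤ d`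
(the dimension of a tropical linear prevariety containing it). -/
noncomputable def polyDim {E : Type*} [AddCommGroup E] [Module ℝ E] (S : Set E) : ℕ :=
  sInf {d | DimLE S d}

/-- `U_N` for `f = min{0, X, Y, X+Y}`: points satisfying all linearizations
`min{u(s₁,s₂), u(s₁+1,s₂), u(s₁,s₂+1), u(s₁+1,s₂+1)}` (minimum attained at
least twice) for all `0 ≤ s₁,s₂ ≤ N-2`. -/
def U4 (N : ℕ) : Set (Fin N × Fin N → ℝ) :=
  {u | ∀ (s₁ s₂ : ℕ) (h₁ : s₁ + 1 < N) (h₂ : s₂ + 1 < N),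
    MinTwice
      ![u (⟨s₁, by omega⟩, ⟨s₂, by omega⟩), u (⟨s₁ + 1, h₁⟩, ⟨s₂, by omega⟩),
        u (⟨s₁, by omega⟩, ⟨s₂ + 1, h₂⟩), u (⟨s₁ + 1, h₁⟩, ⟨s₂ + 1, h₂⟩)]}

/-- Every point which is `0` on columns with even first coordinate and has
arbitrary nonnegative values on columns with odd first coordinate lies in
`U_N` for `f = min{0,X,Y,X+Y}`; consequently `dim U_N ≥ N·⌊N/2⌋`. -/
theorem U4_even_zero_mem_and_dim (N : ℕ) :
    (∀ v : Fin N × Fin N → ℝ, (∀ p, 0 ≤ v p) →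
      (fun p : Fin N × Fin N => if Even (p.1 : ℕ) then 0 else v p) ∈ U4 N) ∧
    N * (N / 2) ≤ polyDim (U4 N) := by
  have hmem : ∀ v : Fin N × Fin N → ℝ, (∀ p, 0 ≤ v p) →
      (fun p : Fin N × Fin N => if Even (p.1 : ℕ) then 0 else v p) ∈ U4 N := by
    intro v hv s₁ s₂ h₁ h₂
    by_cases he : Even s₁
    · refine ⟨0, 2, by decide, ?_, ?_⟩
      · simp [he]
      · intro l
        fin_cases l <;> simp [he, Nat.even_add_one, hv]
    · refine ⟨1, 3, by decide, ?_, ?_⟩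
      · simp [he, Nat.even_add_one]
      · intro l
        fin_cases l <;> simp [he, Nat.even_add_one, hv]
  refine ⟨hmem, ?_⟩
  refine le_csInf ⟨N * N, {⊤}, ?_, ?_⟩ ?_
  · intro A hA
    simp only [Finset.mem_singleton] at hA
    subst hA
    rw [AffineSubspace.direction_top, finrank_top, Module.finrank_fintype_fun_eq_card]
    simp [Fintype.card_prod]
  · intro u _; simp
  · rintro d ⟨F, hdim, hcover⟩
    by_contra hlt
    push_neg at hlt   -- hlt : d < N * (N/2)
    set D := N * (N / 2) with hD
    have hDpos : 0 < D := lt_of_le_of_lt (Nat.zero_le d) hlt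
    have hN : 0 < N := by
      rcases Nat.eq_zero_or_pos N with h | h
      · rw [hD, h] at hDpos; simp at hDpos
      · exact h
    -- the injection of Fin D into odd-first-coordinate grid points
    have hgb1 : ∀ i : Fin D, 2 * ((i : ℕ) / N) + 1 < N := by
      intro i
      have h2 : (i : ℕ) / N < N / 2 := Nat.div_lt_of_lt_mul i.2
      omega
    set g : Fin D → Fin N × Fin N := fun i =>
      (⟨2 * ((i : ℕ) / N) + 1, hgb1 i⟩, ⟨(i : ℕ) % N, Nat.mod_lt _ hN⟩) with hg
    have hgodd : ∀ i, ¬ Even (((g i).1 : ℕ)) := by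
      intro i h
      rw [hg] at h
      simp only [Nat.even_iff] at h
      omega
    have hginj : Function.Injective g := by
      intro i j hij
      have h1 : 2 * ((i : ℕ) / N) + 1 = 2 * ((j : ℕ) / N) + 1 :=
        congrArg (fun p => ((p.1 : Fin N) : ℕ)) hij
      have h2 : (i : ℕ) % N = (j : ℕ) % N :=
        congrArg (fun p => ((p.2 : Fin N) : ℕ)) hij
      have h3 : (i : ℕ) / N = (j : ℕ) / N := by omega
      have h4 : (i : ℕ) = (j : ℕ) := by
        rw [← Nat.div_add_mod (i : ℕ) N, ← Nat.div_add_mod (j : ℕ) N, h3, h2]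
      exact Fin.ext h4
    -- the moment curve
    set w : ℝ → (Fin N × Fin N → ℝ) :=
      fun t p => ∑ i : Fin D, if p = g i then t ^ ((i : ℕ) + 1) else 0 with hw
    have hwg : ∀ (t : ℝ) (i : Fin D), w t (g i) = t ^ ((i : ℕ) + 1) := by
      intro t i
      simp only [hw]
      rw [Finset.sum_eq_single i]
      · rw [if_pos rfl]
      · intro j _ hj
        exact if_neg (fun h => hj (hginj h.symm))
      · intro h; exact absurd (Finset.mem_univ i) h
    have hweven : ∀ (t : ℝ) p, Even ((p.1 : ℕ)) → w t p = 0 := by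
      intro t p hp
      simp only [hw]
      refine Finset.sum_eq_zero fun i _ => if_neg fun h => hgodd i (by rw [← h]; exact hp)
    have hwU : ∀ t : ℝ, 0 < t → w t ∈ U4 N := by
      intro t ht
      have hnn : ∀ p, 0 ≤ w t p := by
        intro p
        simp only [hw]
        refine Finset.sum_nonneg fun i _ => ?_
        split
        · positivity
        · exact le_refl 0
      have heq : (fun p : Fin N × Fin N => if Even ((p.1 : ℕ)) then 0 else w t p) = w t := by
        funext p
        by_cases h : Even ((p.1 : ℕ))
        · rw [if_pos h, hweven t p h]
        · rw [if_neg h]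
      have := hmem (w t) hnn
      rwa [heq] at this
    -- each affine subspace in F meets the curve finitely often
    have hfin : ∀ A ∈ F, {t : ℝ | 0 < t ∧ w t ∈ A}.Finite := by
      intro A hA
      by_contra hinf
      have hinf : {t : ℝ | 0 < t ∧ w t ∈ A}.Infinite := hinf
      obtain e := hinf.natEmbedding
      set τ : Fin (D + 1) → ℝ := fun j => (e (j : ℕ)).1 with hτ
      have hτS : ∀ j, 0 < τ j ∧ w (τ j) ∈ A := fun j => (e (j : ℕ)).2
      have hτinj : Function.Injective τ := by
        intro a b hab
        have := e.injective (Subtype.ext hab)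
        exact Fin.ext (by exact_mod_cast congrArg id this)
      set y : Fin D → (Fin N × Fin N → ℝ) :=
        fun j => w (τ j.succ) - w (τ 0) with hy
      have hymem : ∀ j, y j ∈ A.direction := by
        intro j
        have := AffineSubspace.vsub_mem_direction (hτS j.succ).2 (hτS 0).2
        simpa [hy, vsub_eq_sub] using this
      have hyind : LinearIndependent ℝ y := by
        rw [Fintype.linearIndependent_iff]
        intro c hc
        have hci : ∀ i : Fin D,
            ∑ j, c j * (τ j.succ ^ ((i : ℕ) + 1) - τ 0 ^ ((i : ℕ) + 1)) = 0 := by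
          intro i
          have h := congrFun hc (g i)
          simpa [hy, Finset.sum_apply, Pi.smul_apply, Pi.sub_apply, smul_eq_mul,
            hwg] using h
        set M := Matrix.vandermonde τ with hM
        have hdet : M.det ≠ 0 := Matrix.det_vandermonde_ne_zero_iff.2 hτinj
        set x : Fin (D + 1) → ℝ := Fin.cons (-(∑ j, c j)) c with hx
        have hvm : Matrix.vecMul x M = 0 := by
          funext i
          have hentry : Matrix.vecMul x M i = ∑ j, x j * τ j ^ (i : ℕ) := by
            simp [Matrix.vecMul, dotProduct, hM, Matrix.vandermonde]
          rw [hentry, Pi.zero_apply]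
          refine Fin.cases ?_ ?_ i
          · simp [hx, Fin.sum_univ_succ]
          · intro i
            rw [Fin.sum_univ_succ]
            simp only [hx, Fin.cons_zero, Fin.cons_succ, Fin.val_succ]
            have h2 := hci i
            simp only [mul_sub] at h2
            rw [Finset.sum_sub_distrib, ← Finset.sum_mul] at h2
            linarith
        have hx0 : x = 0 := by
          calc x = Matrix.vecMul x (M * M⁻¹) := by
                rw [Matrix.mul_nonsing_inv _ (isUnit_iff_ne_zero.2 hdet), Matrix.vecMul_one]
            _ = Matrix.vecMul (Matrix.vecMul x M) M⁻¹ := (Matrix.vecMul_vecMul _ _ _).symm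
            _ = 0 := by rw [hvm, Matrix.zero_vecMul]
        intro j
        have := congrFun hx0 j.succ
        simpa [hx, Fin.cons_succ] using this
      set z : Fin D → A.direction := fun j => ⟨y j, hymem j⟩ with hz
      have hzind : LinearIndependent ℝ z :=
        LinearIndependent.of_comp A.direction.subtype (by exact hyind)
      have hcard := hzind.fintype_card_le_finrank
      rw [Fintype.card_fin] at hcard
      have := hdim A hA
      omega
    -- contradiction with infinitude of (0, ∞)
    have hsub : Set.Ioi (0 : ℝ) ⊆ ⋃ A ∈ F, {t : ℝ | 0 < t ∧ w t ∈ A} := by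
      intro t ht
      have h1 : w t ∈ ⋃ A ∈ F, (A : Set (Fin N × Fin N → ℝ)) := hcover (hwU t ht)
      rcases Set.mem_iUnion₂.1 h1 with ⟨A, hA, hmemA⟩
      exact Set.mem_iUnion₂.2 ⟨A, hA, ht, hmemA⟩
    have hIoifin : (Set.Ioi (0 : ℝ)).Finite :=
      Set.Finite.subset (Set.Finite.biUnion F.finite_toSet hfin) hsub
    exact absurd hIoifin (Set.Ioi_infinite 0)
end

section
/- The tropical entropy of the polynomial f = min{0, X, Y, X+Y} satisfies H(f) ≥ 1/2. -/
open MeasureTheory Module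

/-- If `S ⊆ ι → ℝ` contains the open unit cube, any affine cover has dimension ≥ card ι. -/
lemma aux_dimle_card_le {ι : Type*} [Fintype ι] {S : Set (ι → ℝ)}
    (hS : (Set.univ.pi fun _ : ι => Set.Ioo (0:ℝ) 1) ⊆ S) {e : ℕ} (h : DimLE S e) :
    Fintype.card ι ≤ e := by
  obtain ⟨F, hdim, hcov⟩ := h
  by_contra hlt
  push_neg at hlt
  have hzero : ∀ A ∈ F, volume (A : Set (ι → ℝ)) = 0 := by
    intro A hA
    refine Measure.addHaar_affineSubspace _ A ?_
    intro hT
    have := hdim A hA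
    rw [hT, AffineSubspace.direction_top, finrank_top, finrank_fintype_fun_eq_card] at this
    omega
  have h1 : volume (Set.univ.pi fun _ : ι => Set.Ioo (0:ℝ) 1) = 1 := by
    rw [volume_pi_pi]
    simp [Real.volume_Ioo]
  have h2 : volume (Set.univ.pi fun _ : ι => Set.Ioo (0:ℝ) 1)
      ≤ ∑ A ∈ F, volume (A : Set (ι → ℝ)) :=
    le_trans (measure_mono (hS.trans hcov)) (measure_biUnion_finset_le F _)
  rw [Finset.sum_congr rfl hzero, Finset.sum_const_zero, h1] at h2
  simp at h2

/-- Pulling back a cover along an injective linear map. -/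
lemma aux_dimLE_preimage {E F : Type*} [AddCommGroup E] [Module ℝ E] [AddCommGroup F]
    [Module ℝ F] [FiniteDimensional ℝ F]
    (φ : E →ₗ[ℝ] F) (hφ : Function.Injective φ) {S : Set F} {e : ℕ} (h : DimLE S e) :
    DimLE (φ ⁻¹' S) e := by
  classical
  obtain ⟨Fs, hdim, hcov⟩ := h
  refine ⟨Fs.image (AffineSubspace.comap φ.toAffineMap), ?_, ?_⟩
  · intro A' hA'
    simp only [Finset.mem_image] at hA'
    obtain ⟨A, hA, rfl⟩ := hA'
    rcases (AffineSubspace.comap φ.toAffineMap A).eq_bot_or_nonempty with hbot | ⟨p, hp⟩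
    · rw [hbot, AffineSubspace.direction_bot]
      simp
    · have hmap : Submodule.map φ (AffineSubspace.comap φ.toAffineMap A).direction
          ≤ A.direction := by
        rintro _ ⟨v, hv, rfl⟩
        have h1 : v +ᵥ p ∈ AffineSubspace.comap φ.toAffineMap A :=
          AffineSubspace.vadd_mem_of_mem_direction hv hp
        have h2 : φ (v + p) ∈ A := AffineSubspace.mem_comap.mp h1
        have h3 : φ p ∈ A := AffineSubspace.mem_comap.mp hp
        have h4 := AffineSubspace.vsub_mem_direction h2 h3
        have h5 : φ (v + p) -ᵥ φ p = φ v := by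
          simp [map_add]
        rwa [h5] at h4
      calc finrank ℝ (AffineSubspace.comap φ.toAffineMap A).direction
          = finrank ℝ (Submodule.map φ (AffineSubspace.comap φ.toAffineMap A).direction) :=
            (Submodule.equivMapOfInjective φ hφ _).finrank_eq
        _ ≤ finrank ℝ A.direction := Submodule.finrank_mono hmap
        _ ≤ e := hdim A hA
  · intro x hx
    have := hcov hx
    simp only [Set.mem_iUnion] at this ⊢
    obtain ⟨A, hA, hxA⟩ := this
    exact ⟨AffineSubspace.comap φ.toAffineMap A, Finset.mem_image_of_mem _ hA,
      AffineSubspace.mem_comap.mpr hxA⟩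

/-- The embedding of free parameters on odd rows. -/
noncomputable def oddEmb (N : ℕ) : (Fin N × Fin (N / 2) → ℝ) →ₗ[ℝ] (Fin N × Fin N → ℝ) where
  toFun x := fun p => if h : p.2.val % 2 = 1 then
      x (p.1, ⟨p.2.val / 2, by have := p.2.isLt; omega⟩) else 0
  map_add' x y := by
    funext p
    by_cases h : p.2.val % 2 = 1 <;> simp [h]
  map_smul' c x := by
    funext p
    by_cases h : p.2.val % 2 = 1 <;> simp [h]

lemma oddEmb_injective (N : ℕ) : Function.Injective (oddEmb N) := by
  intro x y hxy
  funext ⟨k, j⟩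
  have hj : 2 * j.val + 1 < N := by have := j.isLt; omega
  have := congrFun hxy (k, ⟨2 * j.val + 1, hj⟩)
  simp only [oddEmb, LinearMap.coe_mk, AddHom.coe_mk] at this
  have hmod : (2 * j.val + 1) % 2 = 1 := by omega
  rw [dif_pos hmod, dif_pos hmod] at this
  have hdiv : (2 * j.val + 1) / 2 = j.val := by omega
  simpa [hdiv, Fin.eta] using this

lemma aux_mt01 (a b c d : ℝ) (ha : a = 0) (hb : b = 0) (hc : 0 ≤ c) (hd : 0 ≤ d) :
    MinTwice ![a,b,c,d] := by
  refine ⟨0, 1, by decide, by simp [ha, hb], ?_⟩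
  intro l; fin_cases l <;> simp [ha, hb, hc, hd]

lemma aux_mt23 (a b c d : ℝ) (hc : c = 0) (hd : d = 0) (ha : 0 ≤ a) (hb : 0 ≤ b) :
    MinTwice ![a,b,c,d] := by
  refine ⟨2, 3, by decide, by simp [hc, hd], ?_⟩
  intro l; fin_cases l <;> simp [ha, hb, hc, hd]

lemma oddEmb_mem_U4 (N : ℕ) (x : Fin N × Fin (N / 2) → ℝ)
    (hx : x ∈ (Set.univ.pi fun _ => Set.Ioo (0:ℝ) 1)) : oddEmb N x ∈ U4 N := by
  have hnn : ∀ p : Fin N × Fin N, 0 ≤ oddEmb N x p := by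
    intro p
    simp only [oddEmb, LinearMap.coe_mk, AddHom.coe_mk]
    split
    · exact (hx _ (Set.mem_univ _)).1.le
    · exact le_refl _
  have hzero : ∀ (k : ℕ) (hk : k < N) (k₂ : ℕ) (hk₂ : k₂ < N), k₂ % 2 = 0 →
      oddEmb N x (⟨k, hk⟩, ⟨k₂, hk₂⟩) = 0 := by
    intro k hk k₂ hk₂ h
    simp only [oddEmb, LinearMap.coe_mk, AddHom.coe_mk]
    rw [dif_neg (by omega)]
  intro s₁ s₂ h₁ h₂
  by_cases hs : s₂ % 2 = 0
  · exact aux_mt01 _ _ _ _ (hzero _ _ _ _ hs) (hzero _ _ _ _ hs) (hnn _) (hnn _)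
  · exact aux_mt23 _ _ _ _ (hzero _ _ _ _ (by omega)) (hzero _ _ _ _ (by omega))
      (hnn _) (hnn _)

lemma polyDim_U4_ge (N : ℕ) : N * (N / 2) ≤ polyDim (U4 N) := by
  have hkey : ∀ e : ℕ, DimLE (U4 N) e → N * (N / 2) ≤ e := by
    intro e he
    have hpre := aux_dimLE_preimage (oddEmb N) (oddEmb_injective N) he
    have hsub : (Set.univ.pi fun _ : Fin N × Fin (N / 2) => Set.Ioo (0:ℝ) 1)
        ⊆ (oddEmb N) ⁻¹' (U4 N) := fun x hx => oddEmb_mem_U4 N x hx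
    have := aux_dimle_card_le hsub hpre
    simpa [Fintype.card_prod] using this
  have hne : DimLE (U4 N) (N * N) := by
    refine ⟨{⊤}, ?_, ?_⟩
    · intro A hA
      simp only [Finset.mem_singleton] at hA
      subst hA
      rw [AffineSubspace.direction_top, finrank_top, finrank_fintype_fun_eq_card]
      simp [Fintype.card_prod]
    · intro u _
      simp
  have hmem := Nat.sInf_mem (⟨N * N, hne⟩ : Set.Nonempty {d | DimLE (U4 N) d})
  exact hkey _ hmem

/-- The tropical entropy of `f = min{0, X, Y, X+Y}` is at least `1/2`:
if `dim(U_N)/N²` converges, its limit `H(f)` satisfies `H(f) ≥ 1/2`. -/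
theorem entropy_min0XYXY_ge_half (H : ℝ)
    (hH : Filter.Tendsto (fun N : ℕ => (polyDim (U4 N) : ℝ) / (N : ℝ) ^ 2)
      Filter.atTop (nhds H)) :
    1 / 2 ≤ H := by
  have hlow : Filter.Tendsto (fun N : ℕ => (1:ℝ)/2 - 1/(2*N)) Filter.atTop (nhds (1/2)) := by
    have h0 : Filter.Tendsto (fun N : ℕ => 1/(2*(N:ℝ))) Filter.atTop (nhds 0) := by
      apply Filter.Tendsto.div_atTop (tendsto_const_nhds)
      exact Filter.Tendsto.const_mul_atTop (by norm_num) tendsto_natCast_atTop_atTop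
    simpa using (tendsto_const_nhds.sub h0)
  refine le_of_tendsto_of_tendsto hlow hH ?_
  filter_upwards [Filter.eventually_ge_atTop 1] with N hN
  have hbound : N * (N / 2) ≤ polyDim (U4 N) := polyDim_U4_ge N
  have hNpos : (0:ℝ) < (N:ℝ) := by exact_mod_cast hN
  show (1:ℝ)/2 - 1/(2*N) ≤ (polyDim (U4 N) : ℝ) / (N:ℝ)^2
  have h2 : N*N ≤ 2 * polyDim (U4 N) + N := by
    calc N*N = N * (2*(N/2) + N%2) := by rw [Nat.div_add_mod]
      _ = 2*(N*(N/2)) + N*(N%2) := by ring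
      _ ≤ 2*(polyDim (U4 N)) + N*1 := by gcongr <;> omega
      _ = 2*polyDim (U4 N) + N := by ring
  have h1 : ((N:ℝ) * N - N) ≤ 2 * (polyDim (U4 N) : ℝ) := by
    have := (Nat.cast_le (α := ℝ)).mpr h2
    push_cast at this
    linarith
  rw [div_sub_div _ _ (by norm_num) (by positivity), div_le_div_iff₀ (by positivity) (by positivity)]
  nlinarith [mul_le_mul_of_nonneg_left h1 hNpos.le]
end

section
/- Let V ⊂ ℝ^n be a finite set of k points. Then the entropy of its radical vanishes: H(rad(V)) = lim_{N→∞} dim(W_N)/N^n = 0, where W_N ⊆ ℝ^{N^n} is the set of points satisfying all linearizations (with exponents in {0,…,N−1}^n) of tropical polynomials vanishing on V; moreover dim(W_N) = O(N^{n−1}). -/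
set_option linter.unusedVariables false


/-- `W_N` for a finite set `V = {x 1, …, x k} ⊂ ℝ^n`: the points
`w ∈ ℝ^{N^n}` satisfying the linearizations `min_j {a_j + w(b_j)}`
(minimum attained at least twice) of all tropical polynomials
`min_j {a_j + Σ_i b_{j,i} X_i}` with exponents `b_j ∈ {0,…,N-1}^n`
vanishing at every point of `V` (i.e. of all elements of `rad(V)` with
exponents in the grid). -/
def WSetV (n k : ℕ) (x : Fin k → Fin n → ℝ) (N : ℕ) :
    Set ((Fin n → Fin N) → ℝ) :=
  {w | ∀ (l : ℕ) (a : Fin l → ℝ) (b : Fin l → Fin n → Fin N),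
        (∀ i : Fin k,
          MinTwice fun j => a j + ∑ s, ((b j s : ℕ) : ℝ) * x i s) →
        MinTwice fun j => a j + w (b j)}

namespace EntropyAux


/-- extension of `γ : Fin r → ℝ` to `ℕ`. -/
noncomputable def gnat (r : ℕ) (γ : Fin r → ℝ) : ℕ → ℝ :=
  fun u => if h : u < r then γ ⟨u, h⟩ else 0

lemma gnat_lt {r : ℕ} {γ : Fin r → ℝ} (hγ : StrictMono γ) {u v : ℕ}
    (huv : u < v) (hv : v < r) : gnat r γ u < gnat r γ v := by
  have hu : u < r := lt_trans huv hv
  simp only [gnat, dif_pos hu, dif_pos hv]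
  exact hγ (by simpa using huv)

/-- coefficients of the tropical polynomial with roots `γ 0 < … < γ (r-1)`
(normalized so that `acoef 0 = 0`). -/
noncomputable def acoef (r : ℕ) (γ : Fin r → ℝ) : ℕ → ℝ :=
  fun j => -(∑ i ∈ Finset.range j, gnat r γ (r - 1 - i))

lemma acoef_succ (r : ℕ) (γ : Fin r → ℝ) (j : ℕ) :
    acoef r γ (j + 1) = acoef r γ j - gnat r γ (r - 1 - j) := by
  simp [acoef, Finset.sum_range_succ]; ring

lemma acoef_sub (r : ℕ) (γ : Fin r → ℝ) (i d : ℕ) :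
    acoef r γ (i + d) - acoef r γ i
      = -(∑ j ∈ Finset.range d, gnat r γ (r - 1 - (i + j))) := by
  induction d with
  | zero => simp
  | succ d ih =>
      rw [show i + (d+1) = (i+d)+1 by ring, acoef_succ, Finset.sum_range_succ]
      rw [show r-1-(i+d) = r-1-(i+d) from rfl] at *
      have := ih
      ring_nf
      ring_nf at this
      linarith [this]

/-- strict convexity comparison. -/
lemma acoef_strict {r : ℕ} {γ : Fin r → ℝ} (hγ : StrictMono γ)
    {i₁ i₂ d : ℕ} (h12 : i₁ < i₂) (hd : 1 ≤ d) (hr : i₂ + d ≤ r) :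
    acoef r γ (i₁ + d) - acoef r γ i₁ < acoef r γ (i₂ + d) - acoef r γ i₂ := by
  rw [acoef_sub, acoef_sub]
  have : (∑ j ∈ Finset.range d, gnat r γ (r - 1 - (i₂ + j)))
      < ∑ j ∈ Finset.range d, gnat r γ (r - 1 - (i₁ + j)) := by
    apply Finset.sum_lt_sum_of_nonempty (by simp; omega)
    intro j hj
    have hjd : j < d := Finset.mem_range.mp hj
    apply gnat_lt hγ <;> omega
  linarith

lemma stepDown (f : ℕ → ℝ) :
    ∀ p, (∀ i, i < p → f (i+1) ≤ f i) → ∀ j, j ≤ p → f p ≤ f j := by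
  intro p
  induction p with
  | zero => intro _ j hj; interval_cases j; exact le_refl _
  | succ p ih =>
      intro h j hj
      rcases Nat.eq_or_lt_of_le hj with h1 | h1
      · exact le_of_eq (by rw [h1])
      · exact le_trans (h p (Nat.lt_succ_self p))
          (ih (fun i hi => h i (Nat.lt_succ_of_lt hi)) j (by omega))

lemma stepUp (f : ℕ → ℝ) (q r : ℕ) (h : ∀ i, q ≤ i → i + 1 ≤ r → f i ≤ f (i+1)) :
    ∀ j, q ≤ j → j ≤ r → f q ≤ f j := by
  intro j
  induction j with
  | zero => intro hq _; interval_cases q; exact le_refl _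
  | succ j ih =>
      intro hq hjr
      rcases Nat.eq_or_lt_of_le hq with h1 | h1
      · exact le_of_eq (by rw [h1])
      · exact le_trans (ih (by omega) (by omega)) (h j (by omega) hjr)

lemma minTwice_congr_shift {m : ℕ} {v v' : Fin m → ℝ} {D : ℝ}
    (h : ∀ j, v' j = v j + D) : MinTwice v → MinTwice v' := by
  rintro ⟨j, k, hjk, hvjk, hmin⟩
  exact ⟨j, k, hjk, by rw [h, h, hvjk], fun l => by rw [h, h]; linarith [hmin l]⟩

/-- Key fact 1: the tropical polynomial with coefficients `acoef` vanishes at each root. -/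
lemma vanish_at_root {r : ℕ} {γ : Fin r → ℝ} (hγ : StrictMono γ) (m : Fin r) :
    MinTwice (fun j : Fin (r+1) => acoef r γ j.val + (j.val : ℝ) * γ m) := by
  set c := γ m with hc
  set f : ℕ → ℝ := fun j => acoef r γ j + (j : ℝ) * c with hf
  have hm : m.val < r := m.isLt
  set p : ℕ := r - 1 - m.val with hp
  have hstep : ∀ j, f (j+1) = f j + (c - gnat r γ (r - 1 - j)) := by
    intro j; simp only [hf, acoef_succ]; push_cast; ring
  have hgm : gnat r γ m.val = c := by simp [gnat, hm, hc]
  -- equality at p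
  have heq : f (p+1) = f p := by
    rw [hstep]
    have : r - 1 - p = m.val := by omega
    rw [this, hgm]; ring
  -- decreasing before p
  have hdown : ∀ i, i < p → f (i+1) ≤ f i := by
    intro i hi
    rw [hstep]
    have : gnat r γ m.val < gnat r γ (r - 1 - i) := gnat_lt hγ (by omega) (by omega)
    rw [hgm] at this; linarith
  -- increasing after p+1
  have hup : ∀ i, p + 1 ≤ i → i + 1 ≤ r → f i ≤ f (i+1) := by
    intro i hi hir
    rw [hstep]
    have : gnat r γ (r - 1 - i) < gnat r γ m.val := gnat_lt hγ (by omega) hm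
    rw [hgm] at this; linarith
  have hminall : ∀ l : Fin (r+1), f p ≤ f l.val := by
    intro l
    rcases le_or_gt l.val p with h1 | h1
    · exact stepDown f p hdown l.val h1
    · rw [← heq]
      exact stepUp f (p+1) r hup l.val (by omega) (by omega)
  refine ⟨⟨p, by omega⟩, ⟨p+1, by omega⟩, ?_, ?_, ?_⟩
  · intro h
    have : p = p + 1 := congrArg Fin.val h
    omega
  · exact heq.symm
  · intro l; exact hminall l


variable {n : ℕ} (N r : ℕ) (s₀ : Fin n)

/-- The grid point on the line of `β` (direction `s₀`) at offset `j` from `β`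
(clamped; only used when in bounds). -/
def posPt (β : Fin n → Fin N) (j : ℕ) : Fin n → Fin N :=
  Function.update β s₀ ⟨min ((β s₀ : ℕ) + j) (N-1), by have := (β s₀).isLt; omega⟩

lemma posPt_ne {β : Fin n → Fin N} {j : ℕ} {s : Fin n} (h : s ≠ s₀) :
    posPt N s₀ β j s = β s := Function.update_of_ne h _ _

lemma posPt_s0 {r : ℕ} {β : Fin n → Fin N} {j : ℕ}
    (hβ : (β s₀ : ℕ) + r < N) (hj : j ≤ r) :
    ((posPt N s₀ β j) s₀ : ℕ) = (β s₀ : ℕ) + j := by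
  simp only [posPt, Function.update_self]
  omega

variable (γ : Fin r → ℝ)

/-- exact argmin sets ("pattern") of `w` for the window at `β`. -/
noncomputable def patternOf (w : (Fin n → Fin N) → ℝ) :
    (Fin n → Fin N) → Finset (Fin (r+1)) :=
  fun β => @Finset.filter _
    (fun j => ∀ l : Fin (r+1),
      acoef r γ j.val + w (posPt N s₀ β j.val)
        ≤ acoef r γ l.val + w (posPt N s₀ β l.val))
    (Classical.decPred _) Finset.univ

lemma mem_patternOf {w : (Fin n → Fin N) → ℝ} {β : Fin n → Fin N} {j : Fin (r+1)} :
    j ∈ patternOf N r s₀ γ w β ↔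
      ∀ l : Fin (r+1),
        acoef r γ j.val + w (posPt N s₀ β j.val)
          ≤ acoef r γ l.val + w (posPt N s₀ β l.val) := by
  simp [patternOf]

/-- Key fact 2: windows of an element of `WSetV` have their min attained twice. -/
lemma window {k : ℕ} {x : Fin k → Fin n → ℝ} (hγ : StrictMono γ)
    (hc : ∀ i : Fin k, ∃ m : Fin r, γ m = x i s₀)
    {w : (Fin n → Fin N) → ℝ} (hw : w ∈ WSetV n k x N)
    {β : Fin n → Fin N} (hβ : (β s₀ : ℕ) + r < N) :
    MinTwice (fun j : Fin (r+1) => acoef r γ j.val + w (posPt N s₀ β j.val)) := by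
  apply hw (r+1) (fun j => acoef r γ j.val) (fun j => posPt N s₀ β j.val)
  intro i
  obtain ⟨m, hm⟩ := hc i
  apply minTwice_congr_shift
    (v := fun j : Fin (r+1) => acoef r γ j.val + (j.val : ℝ) * γ m)
    (D := ((β s₀ : ℕ) : ℝ) * x i s₀ +
      ∑ s ∈ Finset.univ.erase s₀, ((β s : ℕ) : ℝ) * x i s)
  · intro j
    have hsplit :
        (∑ s, ((posPt N s₀ β j.val s : ℕ) : ℝ) * x i s)
          = ((posPt N s₀ β j.val s₀ : ℕ) : ℝ) * x i s₀ +
            ∑ s ∈ Finset.univ.erase s₀, ((β s : ℕ) : ℝ) * x i s := by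
      rw [← Finset.sum_erase_add _ _ (Finset.mem_univ s₀), add_comm]
      congr 1
      apply Finset.sum_congr rfl
      intro s hs
      rw [posPt_ne N s₀ (Finset.ne_of_mem_erase hs)]
    rw [hsplit, posPt_s0 N s₀ hβ (by omega : (j : ℕ) ≤ r), hm]
    push_cast
    ring
  · exact vanish_at_root hγ m

/-- the largest element of the argmin set. -/
noncomputable def MTof (w : (Fin n → Fin N) → ℝ) (β : Fin n → Fin N) : Fin (r+1) :=
  if h : (patternOf N r s₀ γ w β).Nonempty then (patternOf N r s₀ γ w β).max' h
  else ⟨0, Nat.succ_pos r⟩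

/-- Core geometric fact: two distinct windows have distinct max-argmin positions. -/
lemma core (hγ : StrictMono γ) (v : (Fin n → Fin N) → ℝ)
    (hv : ∀ β : Fin n → Fin N, (β s₀ : ℕ) + r < N →
      ∃ j ∈ patternOf N r s₀ γ v β, ∃ j' ∈ patternOf N r s₀ γ v β, j ≠ j')
    {β β' : Fin n → Fin N} (hg : (β s₀ : ℕ) + r < N) (hg' : (β' s₀ : ℕ) + r < N)
    (hs : ∀ s, s ≠ s₀ → β s = β' s) (ht : (β s₀ : ℕ) < (β' s₀ : ℕ))
    (hq : posPt N s₀ β (MTof N r s₀ γ v β).val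
        = posPt N s₀ β' (MTof N r s₀ γ v β').val) : False := by
  set P := patternOf N r s₀ γ v with hP
  have hne : (P β).Nonempty := by obtain ⟨j, hj, _⟩ := hv β hg; exact ⟨j, hj⟩
  have hne' : (P β').Nonempty := by obtain ⟨j, hj, _⟩ := hv β' hg'; exact ⟨j, hj⟩
  set MTβ := (P β).max' hne with hMTβ
  set MTβ' := (P β').max' hne' with hMTβ'
  set mTβ' := (P β').min' hne' with hmTβ'
  have hMT1 : MTof N r s₀ γ v β = MTβ := by rw [MTof, dif_pos hne]
  have hMT2 : MTof N r s₀ γ v β' = MTβ' := by rw [MTof, dif_pos hne']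
  rw [hMT1, hMT2] at hq
  have hmlt : mTβ' < MTβ' := by
    obtain ⟨j, hj, j', hj', hjj'⟩ := hv β' hg'
    exact Finset.min'_lt_max' _ hj hj' hjj'
  set t := (β s₀ : ℕ) with htdef
  set t' := (β' s₀ : ℕ) with ht'def
  have hMTβr : (MTβ : ℕ) ≤ r := by have := MTβ.isLt; omega
  have hMTβ'r : (MTβ' : ℕ) ≤ r := by have := MTβ'.isLt; omega
  have hmTβ'r : (mTβ' : ℕ) ≤ r := by have := mTβ'.isLt; omega
  -- the common position q and its line coordinates
  have hq0 : t + (MTβ : ℕ) = t' + (MTβ' : ℕ) := by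
    have h0 := congrArg (fun g => (g s₀ : ℕ)) hq
    simpa [posPt_s0 N s₀ hg hMTβr, posPt_s0 N s₀ hg' hMTβ'r] using h0
  set qv := t + (MTβ : ℕ) with hqv
  set pv := t' + (mTβ' : ℕ) with hpv
  have hpvqv : pv < qv := by omega
  have htpv : t < pv := by omega
  set i := pv - t with hi
  set d := qv - pv with hd
  have hid : i + d = (MTβ : ℕ) := by omega
  have hii : (mTβ' : ℕ) + d = (MTβ' : ℕ) := by omega
  have hmlti : (mTβ' : ℕ) < i := by omega
  -- the common position p on both windows
  have hpp : posPt N s₀ β i = posPt N s₀ β' (mTβ' : ℕ) := by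
    funext s
    by_cases hss : s = s₀
    · rw [hss]
      apply Fin.ext
      rw [posPt_s0 N s₀ hg (show i ≤ r by omega), posPt_s0 N s₀ hg' hmTβ'r]
      omega
    · rw [posPt_ne N s₀ hss, posPt_ne N s₀ hss, hs s hss]
  -- window β' equality between p and q
  have hmem_mT : mTβ' ∈ P β' := Finset.min'_mem _ _
  have hmem_MT' : MTβ' ∈ P β' := Finset.max'_mem _ _
  have hE1 := (mem_patternOf N r s₀ γ).mp hmem_mT MTβ'
  have hE2 := (mem_patternOf N r s₀ γ).mp hmem_MT' mTβ'
  have hmem_MT : MTβ ∈ P β := Finset.max'_mem _ _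
  -- the strict convexity comparison
  have hSL := acoef_strict hγ hmlti (show 1 ≤ d by omega) (show i + d ≤ r by omega)
  rw [hii, hid] at hSL
  have hifin : i < r + 1 := by omega
  by_cases hin : (⟨i, hifin⟩ : Fin (r+1)) ∈ P β
  · have hF1 : acoef r γ i + v (posPt N s₀ β i)
        ≤ acoef r γ (MTβ : ℕ) + v (posPt N s₀ β (MTβ : ℕ)) :=
      (mem_patternOf N r s₀ γ).mp hin MTβ
    have hF2 : acoef r γ (MTβ : ℕ) + v (posPt N s₀ β (MTβ : ℕ))
        ≤ acoef r γ i + v (posPt N s₀ β i) :=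
      (mem_patternOf N r s₀ γ).mp hmem_MT ⟨i, hifin⟩
    rw [hpp] at hF1 hF2
    rw [hq] at hF1 hF2
    linarith
  · have hnotall : ¬ ∀ l : Fin (r+1),
        acoef r γ i + v (posPt N s₀ β i)
          ≤ acoef r γ (l : ℕ) + v (posPt N s₀ β (l : ℕ)) := by
      intro hall
      exact hin ((mem_patternOf N r s₀ γ).mpr hall)
    obtain ⟨l, hl⟩ := not_forall.mp hnotall
    have hl' := not_le.mp hl
    have hMin : acoef r γ (MTβ : ℕ) + v (posPt N s₀ β (MTβ : ℕ))
        ≤ acoef r γ (l : ℕ) + v (posPt N s₀ β (l : ℕ)) :=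
      (mem_patternOf N r s₀ γ).mp hmem_MT l
    have hstrict : acoef r γ (MTβ : ℕ) + v (posPt N s₀ β (MTβ : ℕ))
        < acoef r γ i + v (posPt N s₀ β i) := lt_of_le_of_lt hMin hl'
    rw [hpp] at hstrict
    rw [hq] at hstrict
    linarith

/-- injectivity of the max-argmin position map. -/
lemma Minj (hγ : StrictMono γ) (v : (Fin n → Fin N) → ℝ)
    (hv : ∀ β : Fin n → Fin N, (β s₀ : ℕ) + r < N →
      ∃ j ∈ patternOf N r s₀ γ v β, ∃ j' ∈ patternOf N r s₀ γ v β, j ≠ j')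
    {β β' : Fin n → Fin N} (hg : (β s₀ : ℕ) + r < N) (hg' : (β' s₀ : ℕ) + r < N)
    (hq : posPt N s₀ β (MTof N r s₀ γ v β).val
        = posPt N s₀ β' (MTof N r s₀ γ v β').val) : β = β' := by
  have hss : ∀ s, s ≠ s₀ → β s = β' s := by
    intro s hs
    have h0 := congrFun hq s
    rwa [posPt_ne N s₀ hs, posPt_ne N s₀ hs] at h0
  rcases lt_trichotomy (β s₀ : ℕ) (β' s₀ : ℕ) with hlt | heq | hgt
  · exact (core N r s₀ γ hγ v hv hg hg' hss hlt hq).elim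
  · funext s
    by_cases hs : s = s₀
    · rw [hs]; exact Fin.ext heq
    · exact hss s hs
  · exact (core N r s₀ γ hγ v hv hg' hg (fun s hs => (hss s hs).symm) hgt hq.symm).elim

/-- The linear space of the pattern `P`. -/
def Kspace (P : (Fin n → Fin N) → Finset (Fin (r+1))) :
    Submodule ℝ ((Fin n → Fin N) → ℝ) where
  carrier := {δ | ∀ β : Fin n → Fin N, (β s₀ : ℕ) + r < N →
    ∀ j ∈ P β, ∀ j' ∈ P β, δ (posPt N s₀ β (j : ℕ)) = δ (posPt N s₀ β (j' : ℕ))}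
  add_mem' := by
    intro a b ha hb β hβ j hj j' hj'
    simp only [Pi.add_apply, ha β hβ j hj j' hj', hb β hβ j hj j' hj']
  zero_mem' := by intro β hβ j hj j' hj'; rfl
  smul_mem' := by
    intro c a ha β hβ j hj j' hj'
    simp only [Pi.smul_apply, ha β hβ j hj j' hj']

lemma mem_Kspace {P : (Fin n → Fin N) → Finset (Fin (r+1))}
    {δ : (Fin n → Fin N) → ℝ} :
    δ ∈ Kspace N r s₀ P ↔ ∀ β : Fin n → Fin N, (β s₀ : ℕ) + r < N →
      ∀ j ∈ P β, ∀ j' ∈ P β,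
        δ (posPt N s₀ β (j : ℕ)) = δ (posPt N s₀ β (j' : ℕ)) := Iff.rfl

/-- the rank bound on the pattern space of a realized pattern. -/
lemma kspace_rank (hn : 0 < n) (hγ : StrictMono γ) (hrN : r < N)
    (v : (Fin n → Fin N) → ℝ)
    (hv : ∀ β : Fin n → Fin N, (β s₀ : ℕ) + r < N →
      ∃ j ∈ patternOf N r s₀ γ v β, ∃ j' ∈ patternOf N r s₀ γ v β, j ≠ j') :
    Module.finrank ℝ (Kspace N r s₀ (patternOf N r s₀ γ v)) ≤ r * N ^ (n-1) := by
  classical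
  set P := patternOf N r s₀ γ v with hP
  set Mp : (Fin n → Fin N) → (Fin n → Fin N) :=
    fun β => posPt N s₀ β (MTof N r s₀ γ v β).val with hMp
  set GoodF : Finset (Fin n → Fin N) :=
    Finset.univ.filter (fun β => (β s₀ : ℕ) + r < N) with hGoodF
  set S : Finset (Fin n → Fin N) := Finset.univ \ GoodF.image Mp with hS
  -- key vanishing propagation
  have key : ∀ δ : (Fin n → Fin N) → ℝ, δ ∈ Kspace N r s₀ P →
      (∀ g ∈ S, δ g = 0) → ∀ g, δ g = 0 := by
    intro δ hδ hS0
    suffices H : ∀ m : ℕ, ∀ g : Fin n → Fin N, (g s₀ : ℕ) ≤ m → δ g = 0 by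
      intro g; exact H (g s₀ : ℕ) g le_rfl
    intro m
    induction m with
    | zero =>
        intro g hg
        by_cases hgS : g ∈ S
        · exact hS0 g hgS
        · exfalso
          have hgim : g ∈ GoodF.image Mp := by
            by_contra hnot
            exact hgS (Finset.mem_sdiff.mpr ⟨Finset.mem_univ g, hnot⟩)
          obtain ⟨β, hβg, hβM⟩ := Finset.mem_image.mp hgim
          have hgood : (β s₀ : ℕ) + r < N := (Finset.mem_filter.mp hβg).2
          have hne : (P β).Nonempty := by obtain ⟨j, hj, _⟩ := hv β hgood; exact ⟨j, hj⟩
          have hmlt : (P β).min' hne < (P β).max' hne := by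
            obtain ⟨j, hj, j', hj', hjj'⟩ := hv β hgood
            exact Finset.min'_lt_max' _ hj hj' hjj'
          have hMT : MTof N r s₀ γ v β = (P β).max' hne := by rw [MTof, dif_pos hne]
          have hgs : (g s₀ : ℕ) = (β s₀ : ℕ) + ((P β).max' hne : ℕ) := by
            rw [← hβM, hMp]
            simp only [hMT]
            exact posPt_s0 N s₀ hgood (by have := ((P β).max' hne).isLt; omega)
          omega
    | succ m ih =>
        intro g hg
        by_cases hgS : g ∈ S
        · exact hS0 g hgS
        · have hgim : g ∈ GoodF.image Mp := by
            by_contra hnot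
            exact hgS (Finset.mem_sdiff.mpr ⟨Finset.mem_univ g, hnot⟩)
          obtain ⟨β, hβg, hβM⟩ := Finset.mem_image.mp hgim
          have hgood : (β s₀ : ℕ) + r < N := (Finset.mem_filter.mp hβg).2
          have hne : (P β).Nonempty := by obtain ⟨j, hj, _⟩ := hv β hgood; exact ⟨j, hj⟩
          have hmlt : (P β).min' hne < (P β).max' hne := by
            obtain ⟨j, hj, j', hj', hjj'⟩ := hv β hgood
            exact Finset.min'_lt_max' _ hj hj' hjj'
          have hMT : MTof N r s₀ γ v β = (P β).max' hne := by rw [MTof, dif_pos hne]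
          have hδeq : δ g = δ (posPt N s₀ β ((P β).min' hne : ℕ)) := by
            rw [← hβM, hMp]
            simp only [hMT]
            exact hδ β hgood _ (Finset.max'_mem _ _) _ (Finset.min'_mem _ _)
          rw [hδeq]
          apply ih
          have h1 : ((posPt N s₀ β ((P β).min' hne : ℕ)) s₀ : ℕ)
              = (β s₀ : ℕ) + ((P β).min' hne : ℕ) :=
            posPt_s0 N s₀ hgood (by have := ((P β).min' hne).isLt; omega)
          have hgs : (g s₀ : ℕ) = (β s₀ : ℕ) + ((P β).max' hne : ℕ) := by
            rw [← hβM, hMp]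
            simp only [hMT]
            exact posPt_s0 N s₀ hgood (by have := ((P β).max' hne).isLt; omega)
          omega
  -- restriction map is injective
  let ρ : (Kspace N r s₀ P) →ₗ[ℝ] (↥S → ℝ) :=
    { toFun := fun δ => fun s => (δ : (Fin n → Fin N) → ℝ) s.val
      map_add' := fun a b => rfl
      map_smul' := fun c a => rfl }
  have hρinj : Function.Injective ρ := by
    intro a b hab
    have h0 : ∀ g, ((a : (Fin n → Fin N) → ℝ) - (b : (Fin n → Fin N) → ℝ)) g = 0 := by
      apply key _ (Submodule.sub_mem _ a.2 b.2)
      intro g hg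
      have h1 : (a : (Fin n → Fin N) → ℝ) g = (b : (Fin n → Fin N) → ℝ) g :=
        congrFun hab ⟨g, hg⟩
      simp [Pi.sub_apply, h1]
    apply Subtype.ext
    funext g
    have := h0 g
    simp only [Pi.sub_apply, sub_eq_zero] at this
    exact this
  have hrank1 : Module.finrank ℝ (Kspace N r s₀ P) ≤ S.card := by
    have := LinearMap.finrank_le_finrank_of_injective hρinj
    rwa [Module.finrank_pi, Fintype.card_coe] at this
  -- cardinality of S
  have hinjOn : Set.InjOn Mp ↑GoodF := by
    intro β hβ β' hβ' h
    exact Minj N r s₀ γ hγ v hv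
      (Finset.mem_filter.mp hβ).2 (Finset.mem_filter.mp hβ').2 h
  have himgcard : (GoodF.image Mp).card = GoodF.card :=
    Finset.card_image_of_injOn hinjOn
  have hGoodcard : (N - r) * N ^ (n-1) ≤ GoodF.card := by
    have hsub : GoodF.card = Fintype.card {β : Fin n → Fin N // (β s₀ : ℕ) + r < N} := by
      rw [Fintype.card_subtype]
    have hNr : ∀ t : Fin (N - r), (t : ℕ) < N := fun t =>
      lt_of_lt_of_le t.isLt (Nat.sub_le N r)
    let mkβ : Fin (N - r) → ({s : Fin n // ¬ s = s₀} → Fin N) → (Fin n → Fin N) :=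
      fun t g s => dite (s = s₀) (fun _ => (⟨(t : ℕ), hNr t⟩ : Fin N)) (fun h => g ⟨s, h⟩)
    have mkβ_s0 : ∀ t g, mkβ t g s₀ = (⟨(t : ℕ), hNr t⟩ : Fin N) := fun t g => dif_pos rfl
    have mkβ_ne : ∀ t g s (h : ¬ s = s₀), mkβ t g s = g ⟨s, h⟩ := fun t g s h => dif_neg h
    let Φ : Fin (N - r) × ({s : Fin n // ¬ s = s₀} → Fin N) →
        {β : Fin n → Fin N // (β s₀ : ℕ) + r < N} :=
      fun p => ⟨mkβ p.1 p.2, by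
        rw [mkβ_s0]
        exact Nat.lt_sub_iff_add_lt.mp p.1.isLt⟩
    have hΦ : Function.Injective Φ := by
      rintro ⟨t, g⟩ ⟨t', g'⟩ hpq
      have h : mkβ t g = mkβ t' g' := congrArg Subtype.val hpq
      have ht : t = t' := by
        have h2 := congrFun h s₀
        rw [mkβ_s0, mkβ_s0] at h2
        exact Fin.ext (congrArg (fun z : Fin N => (z : ℕ)) h2)
      have hgg : g = g' := by
        funext s
        have h2 := congrFun h s.val
        rw [mkβ_ne t g s.val s.2, mkβ_ne t' g' s.val s.2] at h2
        simpa using h2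
      rw [ht, hgg]
    have hcard := Fintype.card_le_of_injective Φ hΦ
    have hdom : Fintype.card (Fin (N - r) × ({s : Fin n // ¬ s = s₀} → Fin N))
        = (N - r) * N ^ (n-1) := by
      rw [Fintype.card_prod, Fintype.card_fin, Fintype.card_fun, Fintype.card_fin]
      congr 2
      rw [Fintype.card_subtype_compl, Fintype.card_subtype_eq, Fintype.card_fin]
    rw [hsub]
    rw [hdom] at hcard
    exact hcard
  have huniv : (Finset.univ : Finset (Fin n → Fin N)).card = N ^ n := by
    rw [Finset.card_univ, Fintype.card_fun, Fintype.card_fin, Fintype.card_fin]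
  have hScard : S.card = N ^ n - GoodF.card := by
    rw [hS, Finset.card_sdiff_of_subset (Finset.subset_univ _), himgcard, huniv]
  have hpow : N ^ n = N * N ^ (n-1) := by
    conv_lhs => rw [show n = (n-1)+1 by omega]
    rw [pow_succ]
    ring
  have hsplit : (N - r) * N ^ (n-1) + r * N ^ (n-1) = N * N ^ (n-1) := by
    rw [← add_mul]
    congr 1
    omega
  have : S.card ≤ r * N ^ (n-1) := by omega
  omega

lemma main_dimle (n k N : ℕ) (hn : 0 < n) (x : Fin k → Fin n → ℝ) :
    ∃ F : Finset (AffineSubspace ℝ ((Fin n → Fin N) → ℝ)),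
      (∀ A ∈ F, Module.finrank ℝ A.direction ≤ k * N ^ (n-1)) ∧
      WSetV n k x N ⊆ ⋃ A ∈ F, (A : Set ((Fin n → Fin N) → ℝ)) := by
  classical
  by_cases hk : k = 0
  · refine ⟨∅, by simp, ?_⟩
    intro w hw
    exfalso
    subst hk
    obtain ⟨j, _, _, _, _⟩ := hw 0 Fin.elim0 Fin.elim0 (fun i => i.elim0)
    exact j.elim0
  · set s₀ : Fin n := ⟨0, hn⟩ with hs₀
    set Cset : Finset ℝ := Finset.image (fun i : Fin k => x i s₀) Finset.univ with hCset
    set r : ℕ := Cset.card with hr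
    have hrk : r ≤ k := le_trans Finset.card_image_le (by simp)
    set γ : Fin r → ℝ := fun m => ((Cset.orderIsoOfFin rfl) m : ℝ) with hγdef
    have hγ : StrictMono γ := by
      intro a b hab
      exact Subtype.coe_lt_coe.mpr ((Cset.orderIsoOfFin rfl).strictMono hab)
    have hc : ∀ i : Fin k, ∃ m : Fin r, γ m = x i s₀ := by
      intro i
      have hmem : x i s₀ ∈ Cset := Finset.mem_image_of_mem _ (Finset.mem_univ i)
      obtain ⟨m, hm⟩ := (Cset.orderIsoOfFin rfl).surjective ⟨x i s₀, hmem⟩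
      exact ⟨m, congrArg Subtype.val hm⟩
    by_cases hNr : N ≤ r
    · refine ⟨{⊤}, ?_, ?_⟩
      · intro A hA
        rw [Finset.mem_singleton] at hA
        subst hA
        rw [AffineSubspace.direction_top]
        have h1 : Module.finrank ℝ (⊤ : Submodule ℝ ((Fin n → Fin N) → ℝ)) = N ^ n := by
          rw [finrank_top, Module.finrank_pi, Fintype.card_fun, Fintype.card_fin,
            Fintype.card_fin]
        rw [h1]
        calc N ^ n = N * N ^ (n-1) := by
              conv_lhs => rw [show n = (n-1)+1 by omega]
              rw [pow_succ]; ring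
          _ ≤ k * N ^ (n-1) := Nat.mul_le_mul_right _ (le_trans hNr hrk)
      · intro w _
        simp only [Finset.mem_singleton, Set.iUnion_iUnion_eq_left]
        exact AffineSubspace.mem_top ℝ _ w
    · push_neg at hNr
      set APat : ((Fin n → Fin N) → Finset (Fin (r+1))) →
          AffineSubspace ℝ ((Fin n → Fin N) → ℝ) := fun P =>
        if h : ∃ v, v ∈ WSetV n k x N ∧ patternOf N r s₀ γ v = P then
          AffineSubspace.mk' h.choose (Kspace N r s₀ P)
        else ⊥
      refine ⟨Finset.image APat Finset.univ, ?_, ?_⟩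
      · intro A hA
        obtain ⟨P, _, rfl⟩ := Finset.mem_image.mp hA
        by_cases h : ∃ v, v ∈ WSetV n k x N ∧ patternOf N r s₀ γ v = P
        · rw [show APat P = AffineSubspace.mk' h.choose (Kspace N r s₀ P) from dif_pos h,
            AffineSubspace.direction_mk']
          obtain ⟨hvW, hvP⟩ := h.choose_spec
          rw [← hvP]
          refine le_trans (kspace_rank N r s₀ γ hn hγ hNr h.choose ?_)
            (Nat.mul_le_mul_right _ hrk)
          intro β hβ
          obtain ⟨j, j', hne, heq, hmin⟩ := window N r s₀ γ hγ hc hvW hβ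
          exact ⟨j, (mem_patternOf N r s₀ γ).mpr hmin, j',
            (mem_patternOf N r s₀ γ).mpr
              (fun l => le_trans (le_of_eq heq.symm) (hmin l)), hne⟩
        · rw [show APat P = ⊥ from dif_neg h, AffineSubspace.direction_bot, finrank_bot]
          exact Nat.zero_le _
      · intro w hw
        have hex : ∃ v, v ∈ WSetV n k x N ∧
            patternOf N r s₀ γ v = patternOf N r s₀ γ w := ⟨w, hw, rfl⟩
        refine Set.mem_biUnion
          (Finset.mem_image_of_mem APat (Finset.mem_univ (patternOf N r s₀ γ w))) ?_
        rw [show APat (patternOf N r s₀ γ w)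
            = AffineSubspace.mk' hex.choose (Kspace N r s₀ (patternOf N r s₀ γ w))
          from dif_pos hex]
        rw [SetLike.mem_coe, AffineSubspace.mem_mk', vsub_eq_sub]
        obtain ⟨hvW, hvP⟩ := hex.choose_spec
        intro β hβ j hj j' hj'
        have hjw := (mem_patternOf N r s₀ γ).mp hj
        have hj'w := (mem_patternOf N r s₀ γ).mp hj'
        have hjv := (mem_patternOf N r s₀ γ).mp
          (show j ∈ patternOf N r s₀ γ hex.choose β by rw [hvP]; exact hj)
        have hj'v := (mem_patternOf N r s₀ γ).mp
          (show j' ∈ patternOf N r s₀ γ hex.choose β by rw [hvP]; exact hj')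
        have e1 := hjw j'
        have e2 := hj'w j
        have e3 := hjv j'
        have e4 := hj'v j
        simp only [Pi.sub_apply]
        linarith

end EntropyAux


/-- Vanishing of the entropy of the radical of a zero-dimensional tropical
prevariety `V` of `k` points: `dim(W_N) = O(N^(n-1))` and
`H(rad(V)) = lim dim(W_N)/N^n = 0`. -/
theorem entropy_radical_zero_dim (n k : ℕ) (hn : 0 < n)
    (x : Fin k → Fin n → ℝ) (hx : Function.Injective x) :
    (∃ C : ℝ, ∀ N : ℕ,
      (polyDim (WSetV n k x N) : ℝ) ≤ C * (N : ℝ) ^ (n - 1)) ∧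
    Filter.Tendsto
      (fun N : ℕ => (polyDim (WSetV n k x N) : ℝ) / (N : ℝ) ^ n)
      Filter.atTop (nhds 0) := by
  have hdim : ∀ N : ℕ, polyDim (WSetV n k x N) ≤ k * N ^ (n-1) := by
    intro N
    exact Nat.sInf_le (EntropyAux.main_dimle n k N hn x)
  constructor
  · refine ⟨k, fun N => ?_⟩
    calc (polyDim (WSetV n k x N) : ℝ) ≤ ((k * N ^ (n-1) : ℕ) : ℝ) :=
          Nat.cast_le.mpr (hdim N)
      _ = (k : ℝ) * (N : ℝ) ^ (n-1) := by push_cast; ring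
  · apply squeeze_zero (g := fun N : ℕ => (k : ℝ) / N)
    · intro t; positivity
    · intro t
      rcases Nat.eq_zero_or_pos t with ht | ht
      · subst ht
        simp [zero_pow (show n ≠ 0 by omega)]
      · have h1 : (0:ℝ) < (t:ℝ) ^ n := by positivity
        have h2 : (0:ℝ) < (t:ℝ) := by exact_mod_cast ht
        rw [div_le_div_iff₀ h1 h2]
        have h3 : (polyDim (WSetV n k x t) : ℝ) ≤ (k : ℝ) * (t:ℝ)^(n-1) := by
          calc (polyDim (WSetV n k x t) : ℝ) ≤ ((k * t ^ (n-1) : ℕ) : ℝ) :=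
                Nat.cast_le.mpr (hdim t)
            _ = (k : ℝ) * (t : ℝ) ^ (n-1) := by push_cast; ring
        calc (polyDim (WSetV n k x t) : ℝ) * t ≤ ((k : ℝ) * (t:ℝ)^(n-1)) * t :=
              mul_le_mul_of_nonneg_right h3 (by positivity)
          _ = (k : ℝ) * (t:ℝ)^n := by
              rw [mul_assoc, ← pow_succ, show n-1+1 = n by omega]
    · exact tendsto_const_div_atTop_nhds_zero_nat (k : ℝ)
end

section
/- For the tropical polynomial f = min{0, X, Y, X+Y}, the set W_N of points in ℝ^{N^2} satisfying all linearizations of rad(f) with exponents in {0,…,N−1}^2 satisfies N ≤ dim(W_N) ≤ 4N, where dim(W_N) is the minimal dimension of a tropical linear prevariety containing W_N. In particular, the lower bound holds because W_N contains all points of the form w(x,y) = c(x) for concave functions c: {0,…,N−1} → ℝ. -/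
/-- `(x,y)` is a tropical solution of `min_j {a_j + t_{j,1}X + t_{j,2}Y}`. -/
def IsTropSol2 (m : ℕ) (a : Fin m → ℝ) (t : Fin m → ℤ × ℤ) (x y : ℝ) : Prop :=
  MinTwice fun j => a j + ((t j).1 : ℝ) * x + ((t j).2 : ℝ) * y

/-- `g = min_j {h_j + b_{j,1}X + b_{j,2}Y}` belongs to the radical of
`f = min_j {a_j + t_{j,1}X + t_{j,2}Y}`: it vanishes on the tropical
prevariety of `f`. -/
def InRad2 (m : ℕ) (a : Fin m → ℝ) (t : Fin m → ℤ × ℤ)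
    (l : ℕ) (h : Fin l → ℝ) (bb : Fin l → ℤ × ℤ) : Prop :=
  ∀ x y : ℝ, IsTropSol2 m a t x y → IsTropSol2 l h bb x y

/-- `W_N`: points `w ∈ ℝ^{N×N}` satisfying the linearizations
`min_j {h_j + w(b_j)}` (minimum attained at least twice) of all elements
of `rad(f)` with exponents in `{0,…,N-1}²`. -/
def WSet (m : ℕ) (a : Fin m → ℝ) (t : Fin m → ℤ × ℤ) (N : ℕ) :
    Set (Fin N × Fin N → ℝ) :=
  {w | ∀ (l : ℕ) (h : Fin l → ℝ) (bb : Fin l → Fin N × Fin N),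
        InRad2 m a t l h (fun j => ((((bb j).1 : ℕ) : ℤ), (((bb j).2 : ℕ) : ℤ))) →
        MinTwice fun j => h j + w (bb j)}

-- abbreviations for f
notation "fT" => (![(0, 0), (1, 0), (0, 1), (1, 1)] : Fin 4 → ℤ × ℤ)

lemma sol_x (x : ℝ) : IsTropSol2 4 (fun _ => 0) fT x 0 := by
  rcases le_or_gt 0 x with hx | hx
  · exact ⟨0, 2, by decide, by norm_num [Matrix.cons_val_zero, Matrix.cons_val_one, Matrix.cons_val_two, Matrix.cons_val_three, Matrix.vecHead, Matrix.vecTail],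
      fun l => by fin_cases l <;> simp <;> linarith⟩
  · exact ⟨1, 3, by decide, by norm_num [Matrix.cons_val_two, Matrix.cons_val_three, Matrix.vecHead, Matrix.vecTail],
      fun l => by fin_cases l <;> simp <;> linarith⟩

lemma sol_y (y : ℝ) : IsTropSol2 4 (fun _ => 0) fT 0 y := by
  rcases le_or_gt 0 y with hy | hy
  · exact ⟨0, 1, by decide, by norm_num,
      fun l => by fin_cases l <;> simp <;> linarith⟩
  · exact ⟨2, 3, by decide, by norm_num [Matrix.cons_val_two, Matrix.cons_val_three, Matrix.vecHead, Matrix.vecTail],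
      fun l => by fin_cases l <;> simp <;> linarith⟩

lemma minTwice4_cases {a b c d : ℝ} (h : MinTwice ![a,b,c,d]) :
    (a = b ∧ a ≤ c ∧ a ≤ d) ∨ (a = c ∧ a ≤ b ∧ a ≤ d) ∨ (a = d ∧ a ≤ b ∧ a ≤ c) ∨
    (b = c ∧ b ≤ a ∧ b ≤ d) ∨ (b = d ∧ b ≤ a ∧ b ≤ c) ∨ (c = d ∧ c ≤ a ∧ c ≤ b) := by
  obtain ⟨j, k, hjk, he, hm⟩ := h
  have h0 := hm 0; have h1 := hm 1; have h2 := hm 2; have h3 := hm 3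
  clear hm
  fin_cases j <;> fin_cases k <;> simp at hjk he h0 h1 h2 h3 ⊢ <;>
    first
    | (exact Or.inl ⟨he, h2, h3⟩)
    | (exact Or.inl ⟨he.symm, he ▸ h2, he ▸ h3⟩)
    | (exact Or.inr (Or.inl ⟨he, h1, h3⟩))
    | (exact Or.inr (Or.inl ⟨he.symm, he ▸ h1, he ▸ h3⟩))
    | (exact Or.inr (Or.inr (Or.inl ⟨he, h1, h2⟩)))
    | (exact Or.inr (Or.inr (Or.inl ⟨he.symm, he ▸ h1, he ▸ h2⟩)))
    | (exact Or.inr (Or.inr (Or.inr (Or.inl ⟨he, h0, h3⟩))))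
    | (exact Or.inr (Or.inr (Or.inr (Or.inl ⟨he.symm, he ▸ h0, he ▸ h3⟩))))
    | (exact Or.inr (Or.inr (Or.inr (Or.inr (Or.inl ⟨he, h0, h2⟩)))))
    | (exact Or.inr (Or.inr (Or.inr (Or.inr (Or.inl ⟨he.symm, he ▸ h0, he ▸ h2⟩)))))
    | (exact Or.inr (Or.inr (Or.inr (Or.inr (Or.inr ⟨he, h0, h1⟩)))))
    | (exact Or.inr (Or.inr (Or.inr (Or.inr (Or.inr ⟨he.symm, he ▸ h0, he ▸ h1⟩)))))

lemma sol_char {x y : ℝ} (h : IsTropSol2 4 (fun _ => 0) fT x y) : x = 0 ∨ y = 0 := by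
  have hv : (fun j => (fun _ => (0:ℝ)) j + ((fT j).1 : ℝ) * x + ((fT j).2 : ℝ) * y)
      = ![0, x, y, x + y] := by
    funext j; fin_cases j <;> norm_num
  have h' : MinTwice ![(0:ℝ), x, y, x + y] := by
    rw [← hv]; exact h
  rcases minTwice4_cases h' with ⟨e, l1, l2⟩ | ⟨e, l1, l2⟩ | ⟨e, l1, l2⟩ | ⟨e, l1, l2⟩ |
    ⟨e, l1, l2⟩ | ⟨e, l1, l2⟩
  · exact Or.inl (by linarith)
  · exact Or.inr (by linarith)
  · exact Or.inl (by linarith)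
  · exact Or.inl (by linarith)
  · exact Or.inr (by linarith)
  · exact Or.inl (by linarith)

section Concave
variable {c : ℕ → ℝ}

lemma d_anti (hc : ∀ i : ℕ, c i + c (i + 2) ≤ 2 * c (i + 1)) :
    ∀ i j : ℕ, i ≤ j → c (j + 1) - c j ≤ c (i + 1) - c i := by
  intro i j hij
  induction j, hij using Nat.le_induction with
  | base => exact le_refl _
  | succ n hn ih => have := hc n; linarith

lemma c_diff (p q : ℕ) (hpq : p ≤ q) :
    c q - c p = ∑ i ∈ Finset.Ico p q, (c (i + 1) - c i) := by
  induction q, hpq using Nat.le_induction with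
  | base => simp
  | succ n hn ih =>
      rw [Finset.sum_Ico_succ_top (by omega)]
      rw [← ih]; ring

lemma c_upper (hc : ∀ i : ℕ, c i + c (i + 2) ≤ 2 * c (i + 1)) {p q : ℕ} (hpq : p ≤ q) :
    c q - c p ≤ ((q : ℝ) - p) * (c (p + 1) - c p) := by
  rw [c_diff (c := c) p q hpq]
  have h1 : ∑ i ∈ Finset.Ico p q, (c (i + 1) - c i)
      ≤ (Finset.Ico p q).card • (c (p + 1) - c p) := by
    apply Finset.sum_le_card_nsmul
    intro x hx
    exact d_anti hc p x (Finset.mem_Ico.mp hx).1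
  rw [Nat.card_Ico] at h1
  calc _ ≤ ((q - p : ℕ) : ℝ) * (c (p + 1) - c p) := by
          rw [← nsmul_eq_mul]; exact h1
    _ = ((q:ℝ) - p) * (c (p + 1) - c p) := by
          rw [Nat.cast_sub hpq]

lemma c_lower (hc : ∀ i : ℕ, c i + c (i + 2) ≤ 2 * c (i + 1)) {p q : ℕ} (hpq : p ≤ q) :
    ((q : ℝ) - p) * (c (q + 1) - c q) ≤ c q - c p := by
  rw [c_diff (c := c) p q hpq]
  have h1 : (Finset.Ico p q).card • (c (q + 1) - c q)
      ≤ ∑ i ∈ Finset.Ico p q, (c (i + 1) - c i) := by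
    apply Finset.card_nsmul_le_sum
    intro x hx
    exact d_anti hc x q (le_of_lt (Finset.mem_Ico.mp hx).2)
  rw [Nat.card_Ico] at h1
  calc ((q:ℝ) - p) * (c (q + 1) - c q) = ((q - p : ℕ) : ℝ) * (c (q + 1) - c q) := by
        rw [Nat.cast_sub hpq]
    _ ≤ _ := by rw [← nsmul_eq_mul]; exact h1

lemma concave_mem (N : ℕ) (hc : ∀ i : ℕ, c i + c (i + 2) ≤ 2 * c (i + 1)) :
    (fun p : Fin N × Fin N => c (p.1 : ℕ)) ∈ WSet 4 (fun _ => 0) fT N := by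
  intro l h bb hrad
  -- the target family
  set u : Fin l → ℝ := fun j => h j + c ((bb j).1 : ℕ) with hu
  show MinTwice u
  have hl : Nonempty (Fin l) := by
    obtain ⟨j, -, -, -, -⟩ := hrad 0 0 (sol_x 0)
    exact ⟨j⟩
  obtain ⟨j₀, -, hj₀⟩ := Finset.exists_min_image Finset.univ u ⟨hl.some, Finset.mem_univ _⟩
  have hj₀' : ∀ j', u j₀ ≤ u j' := fun j' => hj₀ j' (Finset.mem_univ _)
  by_cases htwo : ∃ j', j' ≠ j₀ ∧ u j' = u j₀
  · obtain ⟨j', hne, heq⟩ := htwo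
    exact ⟨j₀, j', Ne.symm hne, heq.symm, hj₀'⟩
  exfalso
  push_neg at htwo
  have hstrict : ∀ j, j ≠ j₀ → u j₀ < u j := by
    intro j hj
    exact lt_of_le_of_ne (hj₀' j) (fun hEq => htwo j hj hEq.symm)
  set κ : ℕ := ((bb j₀).1 : ℕ) with hκ
  set x : ℝ := c (κ + 1) - c κ with hx
  have hsol := hrad x 0 (sol_x x)
  set v : Fin l → ℝ := fun j => h j + (((bb j).1 : ℕ) : ℝ) * x with hv
  have hveq : (fun j => h j +
      ((((fun j => ((((bb j).1 : ℕ) : ℤ), (((bb j).2 : ℕ) : ℤ))) j).1 : ℤ) : ℝ) * x +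
      ((((fun j => ((((bb j).1 : ℕ) : ℤ), (((bb j).2 : ℕ) : ℤ))) j).2 : ℤ) : ℝ) * 0) = v := by
    funext j
    simp only [hv]
    push_cast
    ring
  have hsol' : MinTwice v := by
    rw [← hveq]; exact hsol
  have claim : ∀ j, j ≠ j₀ → v j₀ < v j := by
    intro j hj
    have hstr := hstrict j hj
    have hstr' : h j₀ + c κ < h j + c ((bb j).1 : ℕ) := hstr
    show h j₀ + (κ : ℝ) * x < h j + (((bb j).1 : ℕ) : ℝ) * x
    set β : ℕ := ((bb j).1 : ℕ) with hβ
    rcases lt_trichotomy β κ with hb | hb | hb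
    · have hlow := c_lower hc (le_of_lt hb)
      rw [← hx] at hlow
      have hexp : ((κ : ℝ) - β) * x = (κ : ℝ) * x - (β : ℝ) * x := by ring
      rw [hexp] at hlow
      linarith
    · rw [hb] at hstr' ⊢
      linarith
    · have hupp := c_upper hc (le_of_lt hb)
      have hupp' : c β - c κ ≤ ((β : ℝ) - κ) * x := hupp
      have hexp : ((β : ℝ) - κ) * x = (β : ℝ) * x - (κ : ℝ) * x := by ring
      rw [hexp] at hupp'
      linarith
  obtain ⟨p, q, hpq, he, hm⟩ := hsol'
  have hp : p = j₀ := by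
    by_contra hne
    have h1 := claim p hne
    have h2 := hm j₀
    linarith
  have hq : q = j₀ := by
    by_contra hne
    have h1 := claim q hne
    have h2 := hm j₀
    rw [he] at h2
    linarith
  exact hpq (hp.trans hq.symm)
end Concave

section Rect
variable {N : ℕ}

/-- Every axis-parallel rectangle of `w` has its minimal corner value attained twice. -/
def RectProp (w : Fin N × Fin N → ℝ) : Prop :=
  ∀ r r' cc cc' : Fin N, r ≠ r' → cc ≠ cc' →
    MinTwice ![w (r, cc), w (r, cc'), w (r', cc), w (r', cc')]

lemma rect_of_mem {w : Fin N × Fin N → ℝ}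
    (hw : w ∈ WSet 4 (fun _ => 0) fT N) : RectProp w := by
  intro r r' cc cc' hr hcc
  set bb4 : Fin 4 → Fin N × Fin N := ![(r, cc), (r, cc'), (r', cc), (r', cc')] with hbb4
  have hrad : InRad2 4 (fun _ => 0) fT 4 (fun _ => 0)
      (fun j => ((((bb4 j).1 : ℕ) : ℤ), (((bb4 j).2 : ℕ) : ℤ))) := by
    intro x y hsol
    show MinTwice _
    have hfeq : (fun j => (fun _ => (0:ℝ)) j
        + ((((fun j => ((((bb4 j).1 : ℕ) : ℤ), (((bb4 j).2 : ℕ) : ℤ))) j).1 : ℤ) : ℝ) * x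
        + ((((fun j => ((((bb4 j).1 : ℕ) : ℤ), (((bb4 j).2 : ℕ) : ℤ))) j).2 : ℤ) : ℝ) * y)
        = ![((r:ℕ):ℝ) * x + ((cc:ℕ):ℝ) * y, ((r:ℕ):ℝ) * x + ((cc':ℕ):ℝ) * y,
            ((r':ℕ):ℝ) * x + ((cc:ℕ):ℝ) * y, ((r':ℕ):ℝ) * x + ((cc':ℕ):ℝ) * y] := by
      funext j; fin_cases j <;> simp [hbb4] <;> push_cast <;> ring
    rw [hfeq]
    rcases sol_char hsol with rfl | rfl
    · rcases le_total (((cc : ℕ) : ℝ) * y) (((cc' : ℕ) : ℝ) * y) with hy | hy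
      · refine ⟨0, 2, by decide, by norm_num [Matrix.cons_val_two, Matrix.cons_val_three, Matrix.vecHead, Matrix.vecTail], fun l => ?_⟩
        fin_cases l <;> simp <;> linarith
      · refine ⟨1, 3, by decide, by norm_num [Matrix.cons_val_two, Matrix.cons_val_three, Matrix.vecHead, Matrix.vecTail], fun l => ?_⟩
        fin_cases l <;> simp <;> linarith
    · rcases le_total (((r : ℕ) : ℝ) * x) (((r' : ℕ) : ℝ) * x) with hx | hx
      · refine ⟨0, 1, by decide, by norm_num, fun l => ?_⟩
        fin_cases l <;> simp <;> linarith
      · refine ⟨2, 3, by decide, by norm_num [Matrix.cons_val_two, Matrix.cons_val_three, Matrix.vecHead, Matrix.vecTail], fun l => ?_⟩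
        fin_cases l <;> simp <;> linarith
  have hmain := hw 4 (fun _ => 0) bb4 hrad
  have heq : (fun j => (fun _ => (0:ℝ)) j + w (bb4 j))
      = ![w (r, cc), w (r, cc'), w (r', cc), w (r', cc')] := by
    funext j; fin_cases j <;> simp [hbb4]
  rw [heq] at hmain
  exact hmain
end Rect

section Comb
variable {N : ℕ} {w : Fin N × Fin N → ℝ}

/-- From a rectangle constraint: if the two values in column `j₀` rows `r ≠ r'` are distinct
and neither appears anywhere else, then rows `r, r'` agree in every other column. -/
lemma rows_agree (hw : RectProp w) {r r' j₀ j : Fin N} (hrr : r ≠ r') (hjj : j ≠ j₀)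
    (hne : w (r, j₀) ≠ w (r', j₀))
    (h1 : w (r, j) ≠ w (r, j₀)) (h2 : w (r, j) ≠ w (r', j₀))
    (h3 : w (r', j) ≠ w (r, j₀)) (h4 : w (r', j) ≠ w (r', j₀)) :
    w (r, j) = w (r', j) := by
  have hmt := hw r r' j₀ j hrr (Ne.symm hjj)
  rcases minTwice4_cases hmt with ⟨e, -, -⟩ | ⟨e, -, -⟩ | ⟨e, -, -⟩ | ⟨e, -, -⟩ |
    ⟨e, -, -⟩ | ⟨e, -, -⟩
  · exact absurd e.symm h1
  · exact absurd e hne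
  · exact absurd e.symm h3
  · exact absurd e h2
  · exact e
  · exact absurd e.symm h4

/-- Key step: for any column `j₀` of the grid `R ×ˢ C`, either all "private" entries of
column `j₀` share a single value, or some row `r` has all its entries equal to a single
value or appearing in other rows. -/
lemma key_step (hw : RectProp w) (R C : Finset (Fin N)) (j₀ : Fin N) (hj₀ : j₀ ∈ C) :
    (∃ v, ∀ i ∈ R, w (i, j₀) = v ∨ ∃ p ∈ R ×ˢ C.erase j₀, w p = w (i, j₀)) ∨
    (∃ r ∈ R, ∃ v, ∀ j ∈ C, w (r, j) = v ∨ ∃ p ∈ (R.erase r) ×ˢ C, w p = w (r, j)) := by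
  classical
  set priv : Fin N → Prop := fun i => ∀ p ∈ R ×ˢ C.erase j₀, w p ≠ w (i, j₀) with hpriv
  by_cases hpair : ∃ r ∈ R, ∃ r' ∈ R, priv r ∧ priv r' ∧ w (r, j₀) ≠ w (r', j₀)
  · right
    obtain ⟨r, hr, r', hr', hprivr, hprivr', hne⟩ := hpair
    have hrr : r ≠ r' := fun hEq => hne (by rw [hEq])
    refine ⟨r, hr, w (r, j₀), fun j hj => ?_⟩
    by_cases hjj : j = j₀
    · left; rw [hjj]
    · right
      have hjC : j ∈ C.erase j₀ := Finset.mem_erase.mpr ⟨hjj, hj⟩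
      have hrjC : (r, j) ∈ R ×ˢ C.erase j₀ := Finset.mem_product.mpr ⟨hr, hjC⟩
      have hr'jC : (r', j) ∈ R ×ˢ C.erase j₀ := Finset.mem_product.mpr ⟨hr', hjC⟩
      have heq : w (r, j) = w (r', j) :=
        rows_agree hw hrr hjj hne (hprivr _ hrjC) (hprivr' _ hrjC)
          (hprivr _ hr'jC) (hprivr' _ hr'jC)
      refine ⟨(r', j), Finset.mem_product.mpr
        ⟨Finset.mem_erase.mpr ⟨Ne.symm hrr, hr'⟩, hj⟩, heq.symm⟩
  · left
    by_cases hex : ∃ r ∈ R, priv r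
    · obtain ⟨r₀, hr₀, hprivr₀⟩ := hex
      refine ⟨w (r₀, j₀), fun i hi => ?_⟩
      by_cases hpi : priv i
      · left
        by_contra hne
        exact hpair ⟨i, hi, r₀, hr₀, hpi, hprivr₀, hne⟩
      · right
        simp only [hpriv] at hpi
        push_neg at hpi
        obtain ⟨p, hp, hpe⟩ := hpi
        exact ⟨p, hp, hpe⟩
    · refine ⟨0, fun i hi => ?_⟩
      right
      have : ¬ priv i := fun hpi => hex ⟨i, hi, hpi⟩
      simp only [hpriv] at this
      push_neg at this
      obtain ⟨p, hp, hpe⟩ := this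
      exact ⟨p, hp, hpe⟩

lemma image_card_bound (hw : RectProp w) :
    ∀ (n : ℕ) (R C : Finset (Fin N)), R.card + C.card ≤ n →
      ((R ×ˢ C).image w).card ≤ R.card + C.card := by
  classical
  intro n
  induction n with
  | zero =>
      intro R C hcard
      have hR : R = ∅ := Finset.card_eq_zero.mp (by omega)
      subst hR; simp
  | succ n ih =>
      intro R C hcard
      rcases C.eq_empty_or_nonempty with rfl | ⟨j₀, hj₀⟩
      · simp
      have hCpos : 0 < C.card := Finset.card_pos.mpr ⟨j₀, hj₀⟩
      rcases key_step hw R C j₀ hj₀ with ⟨v, hv⟩ | ⟨r, hr, v, hv⟩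
      · have hsub : (R ×ˢ C).image w ⊆ insert v ((R ×ˢ C.erase j₀).image w) := by
          intro z hz
          obtain ⟨p, hp, rfl⟩ := Finset.mem_image.mp hz
          obtain ⟨hp1, hp2⟩ := Finset.mem_product.mp hp
          by_cases hpj : p.2 = j₀
          · have hpp : p = (p.1, j₀) := by rw [← hpj]
            rcases hv p.1 hp1 with hvv | ⟨q, hq, hqe⟩
            · rw [hpp, hvv]; exact Finset.mem_insert_self _ _
            · refine Finset.mem_insert_of_mem (Finset.mem_image.mpr ⟨q, hq, ?_⟩)
              rw [hpp]; exact hqe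
          · refine Finset.mem_insert_of_mem (Finset.mem_image.mpr ⟨p, ?_, rfl⟩)
            exact Finset.mem_product.mpr ⟨hp1, Finset.mem_erase.mpr ⟨hpj, hp2⟩⟩
        have h1 := Finset.card_le_card hsub
        have h2 := Finset.card_insert_le v ((R ×ˢ C.erase j₀).image w)
        have h3 := ih R (C.erase j₀) (by rw [Finset.card_erase_of_mem hj₀]; omega)
        rw [Finset.card_erase_of_mem hj₀] at h3
        omega
      · have hsub : (R ×ˢ C).image w ⊆ insert v (((R.erase r) ×ˢ C).image w) := by
          intro z hz
          obtain ⟨p, hp, rfl⟩ := Finset.mem_image.mp hz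
          obtain ⟨hp1, hp2⟩ := Finset.mem_product.mp hp
          by_cases hpr : p.1 = r
          · have hpp : p = (r, p.2) := by rw [← hpr]
            rcases hv p.2 hp2 with hvv | ⟨q, hq, hqe⟩
            · rw [hpp, hvv]; exact Finset.mem_insert_self _ _
            · refine Finset.mem_insert_of_mem (Finset.mem_image.mpr ⟨q, hq, ?_⟩)
              rw [hpp]; exact hqe
          · refine Finset.mem_insert_of_mem (Finset.mem_image.mpr ⟨p, ?_, rfl⟩)
            exact Finset.mem_product.mpr ⟨Finset.mem_erase.mpr ⟨hpr, hp1⟩, hp2⟩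
        have hRpos : 0 < R.card := Finset.card_pos.mpr ⟨r, hr⟩
        have h1 := Finset.card_le_card hsub
        have h2 := Finset.card_insert_le v (((R.erase r) ×ˢ C).image w)
        have h3 := ih (R.erase r) C (by rw [Finset.card_erase_of_mem hr]; omega)
        rw [Finset.card_erase_of_mem hr] at h3
        omega
end Comb

section Cover
lemma dimLE_of_card_le {N K : ℕ} (S : Set (Fin N × Fin N → ℝ))
    (hS : ∀ w ∈ S, ((Finset.univ ×ˢ Finset.univ).image w).card ≤ K) : DimLE S K := by
  classical
  refine ⟨Finset.image (fun φ : (Fin N × Fin N) → Fin K =>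
      (LinearMap.range (LinearMap.funLeft ℝ ℝ φ)).toAffineSubspace) Finset.univ, ?_, ?_⟩
  · intro A hA
    obtain ⟨φ, -, rfl⟩ := Finset.mem_image.mp hA
    rw [Submodule.toAffineSubspace_direction]
    calc Module.finrank ℝ (LinearMap.range (LinearMap.funLeft ℝ ℝ φ))
        ≤ Module.finrank ℝ (Fin K → ℝ) := LinearMap.finrank_range_le _
      _ = K := by simp
  · intro w hw
    set s : Finset ℝ := (Finset.univ ×ˢ Finset.univ).image w with hs
    have hcard : Fintype.card ↥s ≤ Fintype.card (Fin K) := by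
      rw [Fintype.card_coe, Fintype.card_fin]
      exact hS w hw
    obtain ⟨e⟩ := Function.Embedding.nonempty_of_card_le hcard
    have hmem : ∀ p : Fin N × Fin N, w p ∈ s := by
      intro p
      exact Finset.mem_image.mpr ⟨p,
        Finset.mem_product.mpr ⟨Finset.mem_univ _, Finset.mem_univ _⟩, rfl⟩
    set φ : (Fin N × Fin N) → Fin K := fun p => e ⟨w p, hmem p⟩ with hφ
    rw [Set.mem_iUnion₂]
    refine ⟨(LinearMap.range (LinearMap.funLeft ℝ ℝ φ)).toAffineSubspace,
      Finset.mem_image.mpr ⟨φ, Finset.mem_univ _, rfl⟩, ?_⟩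
    rw [AffineSubspace.mem_coe, Submodule.mem_toAffineSubspace]
    refine ⟨Function.extend (⇑e) (fun a => (a : ℝ)) 0, ?_⟩
    funext p
    show Function.extend (⇑e) (fun a => (a : ℝ)) 0 (φ p) = w p
    exact e.injective.extend_apply _ _ _
end Cover

section Lower

lemma lower_bound {N d : ℕ} (hd : DimLE (WSet 4 (fun _ => 0) fT N) d) : N ≤ d := by
  classical
  rcases Nat.eq_zero_or_pos N with rfl | hN
  · exact Nat.zero_le d
  obtain ⟨F, hdim, hcov⟩ := hd
  set P : ℕ → (Fin N × Fin N → ℝ) :=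
    fun t => fun p => -((t : ℝ) + 1) ^ ((p.1 : ℕ) + 1) with hP
  have hmem : ∀ t, P t ∈ WSet 4 (fun _ => 0) fT N := by
    intro t
    refine concave_mem (c := fun i => -((t : ℝ) + 1) ^ (i + 1)) N ?_
    intro i
    have hkey : 0 ≤ ((t:ℝ)+1) ^ (i+1) * (((t:ℝ)+1) - 1) ^ 2 := by positivity
    have hexpand : ((t:ℝ)+1) ^ (i+1) * (((t:ℝ)+1) - 1) ^ 2
        = ((t:ℝ)+1) ^ (i+3) - 2 * ((t:ℝ)+1) ^ (i+2) + ((t:ℝ)+1) ^ (i+1) := by ring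
    rw [hexpand] at hkey
    show -((t:ℝ)+1) ^ (i+1) + -((t:ℝ)+1) ^ (i+2+1) ≤ 2 * (-((t:ℝ)+1) ^ (i+1+1))
    have h1 : i+2+1 = i+3 := rfl
    have h2 : i+1+1 = i+2 := rfl
    rw [h1, h2]
    linarith
  have hsel : ∀ t : ℕ, ∃ A : F, P t ∈ (A : AffineSubspace ℝ (Fin N × Fin N → ℝ)) := by
    intro t
    have h1 := hcov (hmem t)
    rw [Set.mem_iUnion₂] at h1
    obtain ⟨A, hA, hmemA⟩ := h1
    exact ⟨⟨A, hA⟩, hmemA⟩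
  choose f hf using hsel
  obtain ⟨b, hb⟩ := Finite.exists_infinite_fiber f
  have hbinf : (f ⁻¹' {b}).Infinite := Set.infinite_coe_iff.mp hb
  obtain ⟨T, hTsub, hTcard⟩ := hbinf.exists_subset_card_eq (N + 1)
  set σ := T.orderIsoOfFin hTcard with hσ
  set ts : Fin (N + 1) → ℕ := fun k => (σ k : ℕ) with hts
  have hts_mono : StrictMono ts := by
    intro a b' hab
    exact Subtype.coe_lt_coe.mpr (σ.strictMono hab)
  set ss : Fin (N + 1) → ℝ := fun k => (ts k : ℝ) + 1 with hss
  have hss_mono : StrictMono ss := by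
    intro a b' hab
    have := hts_mono hab
    simp only [hss]
    have : (ts a : ℝ) < ts b' := by exact_mod_cast this
    linarith
  set q : Fin (N + 1) → (Fin N × Fin N → ℝ) := fun k => P (ts k) with hq
  have hqb : ∀ k, q k ∈ (b : AffineSubspace ℝ (Fin N × Fin N → ℝ)) := by
    intro k
    have hmemT : ts k ∈ (T : Set ℕ) := by
      simp only [hts, Finset.mem_coe]
      exact (σ k).2
    have hfk : f (ts k) = b := hTsub hmemT
    have := hf (ts k)
    rw [hfk] at this
    exact this
  have haff : AffineIndependent ℝ q := by
    rw [affineIndependent_iff]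
    intro s wt hsum hcomb
    set lam : Fin (N + 1) → ℝ := fun k => if k ∈ s then wt k else 0 with hlam
    have hsum' : ∑ k, lam k = 0 := by
      rw [hlam]
      rw [Finset.sum_ite_mem]
      simpa using hsum
    have hcomb' : ∑ k, lam k • q k = 0 := by
      rw [hlam]
      have : ∑ k, (if k ∈ s then wt k else 0) • q k
          = ∑ k ∈ Finset.univ ∩ s, wt k • q k := by
        rw [← Finset.sum_ite_mem]
        congr 1
        funext k
        split <;> simp
      rw [this]
      simpa using hcomb
    have hV : ∀ i : Fin (N + 1), ∑ k, lam k * ss k ^ (i : ℕ) = 0 := by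
      intro i
      rcases i with ⟨iv, hiv⟩
      match iv, hiv with
      | 0, _ => simpa using hsum'
      | (m+1), hiv =>
        have hmN : m < N := by omega
        have := congrFun hcomb' (⟨m, hmN⟩, ⟨0, hN⟩)
        rw [Finset.sum_apply] at this
        simp only [Pi.zero_apply] at this
        have heval : ∀ k, (lam k • q k) ((⟨m, hmN⟩ : Fin N), (⟨0, hN⟩ : Fin N))
            = -(lam k * ss k ^ (m + 1)) := by
          intro k
          simp only [Pi.smul_apply, smul_eq_mul, hq, hP, hss]
          ring
        rw [Finset.sum_congr rfl (fun k _ => heval k)] at this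
        rw [Finset.sum_neg_distrib] at this
        have h0 : ∑ k, lam k * ss k ^ (m + 1) = 0 := by linarith [this]
        exact h0
    set V : Matrix (Fin (N+1)) (Fin (N+1)) ℝ := Matrix.vandermonde ss with hVdef
    have hdet : V.det ≠ 0 := by
      rw [hVdef, Matrix.det_vandermonde]
      apply Finset.prod_ne_zero_iff.mpr
      intro i _
      apply Finset.prod_ne_zero_iff.mpr
      intro j hj
      have hlt : ss i < ss j := hss_mono (Finset.mem_Ioi.mp hj)
      exact sub_ne_zero.mpr (ne_of_gt hlt)
    have hvm : Matrix.vecMul lam V = 0 := by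
      funext i
      rw [hVdef]
      simp only [Matrix.vecMul, dotProduct, Matrix.vandermonde, Matrix.of_apply,
        Pi.zero_apply]
      exact hV i
    have hlam0 : lam = 0 := by
      have hunit : IsUnit V.det := Ne.isUnit hdet
      have h2 := congrArg (fun u => Matrix.vecMul u V⁻¹) hvm
      rw [Matrix.vecMul_vecMul, Matrix.mul_nonsing_inv _ hunit, Matrix.vecMul_one,
        Matrix.zero_vecMul] at h2
      exact h2
    intro e he
    have h3 := congrFun hlam0 e
    simp only [hlam, if_pos he, Pi.zero_apply] at h3
    exact h3
  have hcard : Fintype.card (Fin (N+1)) = N + 1 := Fintype.card_fin _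
  have hrank := haff.finrank_vectorSpan hcard
  have hsub : Set.range q ⊆ ((b : AffineSubspace ℝ (Fin N × Fin N → ℝ)) : Set _) :=
    Set.range_subset_iff.mpr hqb
  have hle : vectorSpan ℝ (Set.range q) ≤ (b : AffineSubspace ℝ (Fin N × Fin N → ℝ)).direction := by
    rw [AffineSubspace.direction_eq_vectorSpan]
    exact vectorSpan_mono ℝ hsub
  have hfin := Submodule.finrank_mono hle
  rw [hrank] at hfin
  exact hfin.trans (hdim b b.2)
end Lower


/-- For `f = min{0, X, Y, X+Y}` (exponents the unit square), the set `W_N`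
of points satisfying the linearizations of all elements of `rad(f)` with
exponents in `{0,…,N-1}²` contains every point `w(x,y) = c(x)` with
`c` concave, and `N ≤ dim(W_N) ≤ 4N`. -/
theorem WSet_unit_square_bounds (N : ℕ) :
    (∀ c : ℕ → ℝ, (∀ i : ℕ, c i + c (i + 2) ≤ 2 * c (i + 1)) →
      (fun p : Fin N × Fin N => c (p.1 : ℕ)) ∈
        WSet 4 (fun _ => 0) ![(0, 0), (1, 0), (0, 1), (1, 1)] N) ∧
    N ≤ polyDim (WSet 4 (fun _ => 0) ![(0, 0), (1, 0), (0, 1), (1, 1)] N) ∧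
    polyDim (WSet 4 (fun _ => 0) ![(0, 0), (1, 0), (0, 1), (1, 1)] N) ≤ 4 * N := by
  have hupper : DimLE (WSet 4 (fun _ => 0) ![(0, 0), (1, 0), (0, 1), (1, 1)] N) (4 * N) := by
    apply dimLE_of_card_le
    intro w hw
    have h1 := image_card_bound (rect_of_mem hw) (N + N) Finset.univ Finset.univ (by simp)
    have h2 : (Finset.univ : Finset (Fin N)).card = N := by simp
    rw [h2] at h1
    omega
  refine ⟨fun c hc => concave_mem N hc, ?_, ?_⟩
  · have hmem := Nat.sInf_mem (⟨4 * N, hupper⟩ :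
      {d | DimLE (WSet 4 (fun _ => 0) ![(0, 0), (1, 0), (0, 1), (1, 1)] N) d}.Nonempty)
    exact lower_bound hmem
  · exact Nat.sInf_le hupper
end
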